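/- Let α ∈ (0,1), λ ∈ (0,1), C₂ > 0, h > 0, and let w be a smooth function on D with e^{2w} integrable with respect to dA. Then there exists a constant C ≥ 0, depending only on h, λ, C₂ and ⨍ e^{2w} dA, such that for every smooth function u on D with |∇u|², u, and e^{2u} integrable with respect to dA and satisfying the Moser–Chen type inequality ⨍ e^{2u} dA ≤ C₂ · exp( ⨍ |∇u|² dA + ⨍ 2u dA ), the discrete Morse flow functional Ĵ(u) := (1/(2h)) ⨍ |e^{u} − e^{w}|² dA + (1/2) ⨍ (|∇u|² + 2λu) dA − (1/2) log( ⨍ e^{2u} dA ) satisfies Ĵ(u) ≥ −C. In particular the infimum of Ĵ over this class of functions is finite. -/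

import Mathlib

open MeasureTheory Real Set

/-- The football coordinate domain `D = (0, π) × (0, 2π) ⊆ ℝ²`. -/
noncomputable def footballDomain : Set (ℝ × ℝ) := Ioo 0 π ×ˢ Ioo 0 (2 * π)

/-- The football area measure `dA = α sin r dr dθ` on `D`. -/
noncomputable def footballMeasure (α : ℝ) : Measure (ℝ × ℝ) :=
  (volume.restrict footballDomain).withDensity fun p => ENNReal.ofReal (α * Real.sin p.1)

/-- The average `⨍ f dA = (1/(4πα)) ∫_D f dA` on the football (whose total area is `4πα`). -/
noncomputable def footballAvg (α : ℝ) (f : ℝ × ℝ → ℝ) : ℝ :=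
  (1 / (4 * π * α)) * ∫ p, f p ∂(footballMeasure α)

/-- The squared gradient `|∇u|²(r,θ) = (∂_r u)² + (∂_θ u)²/(α sin r)²` for the football
metric `g₀ = dr² + (α sin r)² dθ²`. -/
noncomputable def footballGradSq (α : ℝ) (u : ℝ × ℝ → ℝ) (p : ℝ × ℝ) : ℝ :=
  (fderiv ℝ u p (1, 0)) ^ 2 + (fderiv ℝ u p (0, 1)) ^ 2 / (α * Real.sin p.1) ^ 2

/-- The discrete Morse flow functional
`Ĵ(u) = (1/(2h)) ⨍ |e^u − e^w|² dA + (1/2) ⨍ (|∇u|² + 2λu) dA − (1/2) log ⨍ e^{2u} dA`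
for the modified (λ-regularized) Ricci flow on the football, where `w` is the previous step. -/
noncomputable def footballJhat (α lam h : ℝ) (w u : ℝ × ℝ → ℝ) : ℝ :=
  (1 / (2 * h)) * footballAvg α (fun p => (Real.exp (u p) - Real.exp (w p)) ^ 2) +
    (1 / 2) * footballAvg α (fun p => footballGradSq α u p + 2 * lam * u p) -
    (1 / 2) * Real.log (footballAvg α (fun p => Real.exp (2 * u p)))


lemma footballAvg_nonneg' (α : ℝ) (hα : 0 < α) (f : ℝ × ℝ → ℝ) (hf : ∀ p, 0 ≤ f p) :
    0 ≤ footballAvg α f := by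
  have hπ := Real.pi_pos
  have h1 : 0 ≤ ∫ p, f p ∂(footballMeasure α) := integral_nonneg hf
  have h2 : (0:ℝ) ≤ 1 / (4 * π * α) := by positivity
  exact mul_nonneg h2 h1

lemma footballAvg_mono' (α : ℝ) (hα : 0 < α) {f g : ℝ × ℝ → ℝ}
    (hf : Integrable f (footballMeasure α)) (hg : Integrable g (footballMeasure α))
    (hle : ∀ p, f p ≤ g p) : footballAvg α f ≤ footballAvg α g := by
  have hπ := Real.pi_pos
  have h2 : (0:ℝ) ≤ 1 / (4 * π * α) := by positivity
  exact mul_le_mul_of_nonneg_left (integral_mono hf hg hle) h2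

lemma footballAvg_add' (α : ℝ) {f g : ℝ × ℝ → ℝ} (hf : Integrable f (footballMeasure α))
    (hg : Integrable g (footballMeasure α)) :
    footballAvg α (fun p => f p + g p) = footballAvg α f + footballAvg α g := by
  unfold footballAvg
  rw [integral_add hf hg]; ring

lemma footballAvg_smul' (α c : ℝ) (f : ℝ × ℝ → ℝ) :
    footballAvg α (fun p => c * f p) = c * footballAvg α f := by
  unfold footballAvg
  rw [show (fun p => c * f p) = fun p => c • f p from rfl, integral_smul, smul_eq_mul]
  ring

set_option maxHeartbeats 1000000 in
/-- for `α ∈ (0,1)`, `λ ∈ (0,1)`, `C₂ > 0`, `h > 0` and a smooth `w` on `D`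
with `e^{2w}` integrable, there is a constant `C ≥ 0` (depending only on `h`, `λ`, `C₂` and
`⨍ e^{2w} dA`) such that `Ĵ(u) ≥ −C` for every smooth `u` on `D` with `|∇u|²`, `u`, `e^{2u}`
integrable and satisfying the Moser–Chen type inequality; in particular the infimum of `Ĵ`
over this class is finite. -/
theorem footballJhat_bounded_below
    (α lam C₂ h : ℝ) (hα : α ∈ Ioo (0 : ℝ) 1) (hlam : lam ∈ Ioo (0 : ℝ) 1)
    (hC₂ : 0 < C₂) (hh : 0 < h)
    (w : ℝ × ℝ → ℝ) (hw : ContDiffOn ℝ (⊤ : ℕ∞) w footballDomain)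
    (hwexp : Integrable (fun p => Real.exp (2 * w p)) (footballMeasure α)) :
    ∃ C : ℝ, 0 ≤ C ∧
      ∀ u : ℝ × ℝ → ℝ, ContDiffOn ℝ (⊤ : ℕ∞) u footballDomain →
        Integrable (footballGradSq α u) (footballMeasure α) →
        Integrable u (footballMeasure α) →
        Integrable (fun p => Real.exp (2 * u p)) (footballMeasure α) →
        footballAvg α (fun p => Real.exp (2 * u p)) ≤
          C₂ * Real.exp (footballAvg α (footballGradSq α u) +
            footballAvg α (fun p => 2 * u p)) →
        footballJhat α lam h w u ≥ -C := by
  obtain ⟨hα0, hα1⟩ := hα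
  obtain ⟨hl0, hl1⟩ := hlam
  have hπ : (0:ℝ) < π := Real.pi_pos
  have h1l : (0:ℝ) < 1 - lam := by linarith
  obtain ⟨W, hWdef⟩ : ∃ x : ℝ, x = footballAvg α (fun p => Real.exp (2 * w p)) :=
    ⟨_, rfl⟩
  obtain ⟨K, hKdef⟩ : ∃ x : ℝ, x = lam / 2 * Real.log C₂ + W / (2 * h) +
      (1 - lam) / 2 * (Real.log (2 * h * (1 - lam)) - 1) := ⟨_, rfl⟩
  refine ⟨|K|, abs_nonneg K, ?_⟩
  intro u hu hgrad hui hue hmc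
  obtain ⟨A, hAdef⟩ : ∃ x : ℝ, x = footballAvg α (fun p => Real.exp (2 * u p)) :=
    ⟨_, rfl⟩
  obtain ⟨B, hBdef⟩ : ∃ x : ℝ,
      x = footballAvg α (fun p => (Real.exp (u p) - Real.exp (w p)) ^ 2) := ⟨_, rfl⟩
  obtain ⟨X, hXdef⟩ : ∃ x : ℝ, x = footballAvg α (footballGradSq α u) := ⟨_, rfl⟩
  obtain ⟨Y, hYdef⟩ : ∃ x : ℝ, x = footballAvg α (fun p => 2 * u p) := ⟨_, rfl⟩
  rw [← hAdef, ← hXdef, ← hYdef] at hmc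
  -- pointwise bound  e^{2u} ≤ 2 (e^u - e^w)^2 + 2 e^{2w}
  have hpt : ∀ p : ℝ × ℝ, Real.exp (2 * u p) ≤
      2 * (Real.exp (u p) - Real.exp (w p)) ^ 2 + 2 * Real.exp (2 * w p) := by
    intro p
    have h1 : Real.exp (2 * u p) = Real.exp (u p) * Real.exp (u p) := by
      rw [two_mul, Real.exp_add]
    have h2 : Real.exp (2 * w p) = Real.exp (w p) * Real.exp (w p) := by
      rw [two_mul, Real.exp_add]
    nlinarith [sq_nonneg (Real.exp (u p) - 2 * Real.exp (w p)),
      sq_nonneg (Real.exp (u p) - Real.exp (w p))]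
  -- integrability of the squared difference
  have hDmeas : MeasurableSet footballDomain :=
    measurableSet_Ioo.prod measurableSet_Ioo
  have hcont : ContinuousOn (fun p => (Real.exp (u p) - Real.exp (w p)) ^ 2)
      footballDomain := by
    have hcu : ContinuousOn u footballDomain := hu.continuousOn
    have hcw : ContinuousOn w footballDomain := hw.continuousOn
    exact ((Real.continuous_exp.comp_continuousOn hcu).sub
      (Real.continuous_exp.comp_continuousOn hcw)).pow 2
  have hac : footballMeasure α ≪ volume.restrict footballDomain :=
    withDensity_absolutelyContinuous _ _
  have hmeas : AEStronglyMeasurable (fun p => (Real.exp (u p) - Real.exp (w p)) ^ 2)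
      (footballMeasure α) :=
    (hcont.aestronglyMeasurable hDmeas).mono_ac hac
  have hgint : Integrable (fun p => 2 * Real.exp (2 * u p) + 2 * Real.exp (2 * w p))
      (footballMeasure α) := (hue.const_mul 2).add (hwexp.const_mul 2)
  have hsqint : Integrable (fun p => (Real.exp (u p) - Real.exp (w p)) ^ 2)
      (footballMeasure α) := by
    refine Integrable.mono' hgint hmeas ?_
    filter_upwards with p
    have h1 : Real.exp (2 * u p) = Real.exp (u p) * Real.exp (u p) := by
      rw [two_mul, Real.exp_add]
    have h2 : Real.exp (2 * w p) = Real.exp (w p) * Real.exp (w p) := by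
      rw [two_mul, Real.exp_add]
    rw [Real.norm_eq_abs, abs_of_nonneg (sq_nonneg _)]
    nlinarith [sq_nonneg (Real.exp (u p) + Real.exp (w p)), Real.exp_pos (u p),
      Real.exp_pos (w p)]
  -- A ≤ 2B + 2W
  have hA2BW : A ≤ 2 * B + 2 * W := by
    have hgint2 : Integrable (fun p =>
        2 * (Real.exp (u p) - Real.exp (w p)) ^ 2 + 2 * Real.exp (2 * w p))
        (footballMeasure α) := (hsqint.const_mul 2).add (hwexp.const_mul 2)
    have hm := footballAvg_mono' α hα0 hue hgint2 (fun p => hpt p)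
    have heq : footballAvg α (fun p =>
        2 * (Real.exp (u p) - Real.exp (w p)) ^ 2 + 2 * Real.exp (2 * w p))
        = 2 * B + 2 * W := by
      rw [footballAvg_add' α (hsqint.const_mul 2) (hwexp.const_mul 2),
        footballAvg_smul', footballAvg_smul', ← hBdef, ← hWdef]
    rw [heq, ← hAdef] at hm
    exact hm
  -- nonnegativity
  have hBnn : 0 ≤ B := by
    rw [hBdef]; exact footballAvg_nonneg' α hα0 _ (fun p => sq_nonneg _)
  have hWnn : 0 ≤ W := by
    rw [hWdef]; exact footballAvg_nonneg' α hα0 _ (fun p => (Real.exp_pos _).le)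
  have hXnn : 0 ≤ X := by
    rw [hXdef]
    refine footballAvg_nonneg' α hα0 _ (fun p => ?_)
    exact add_nonneg (sq_nonneg _) (div_nonneg (sq_nonneg _) (sq_nonneg _))
  -- value of the functional
  have hJ : footballJhat α lam h w u
      = 1 / (2 * h) * B + 1 / 2 * (X + lam * Y) - 1 / 2 * Real.log A := by
    unfold footballJhat
    have hfun : (fun p => footballGradSq α u p + 2 * lam * u p)
        = fun p => footballGradSq α u p + lam * (2 * u p) := by
      funext p; ring
    rw [hfun, footballAvg_add' α hgrad ((hui.const_mul 2).const_mul lam),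
      footballAvg_smul', ← hBdef, ← hXdef, ← hYdef, ← hAdef]
  rcases lt_or_ge 0 A with hApos | hAle
  · -- main case
    have hc : (0:ℝ) < 2 * h * (1 - lam) := by positivity
    have hS : (0:ℝ) < 2 * B + 2 * W := lt_of_lt_of_le hApos hA2BW
    have hlog1 : Real.log A ≤ Real.log C₂ + (X + Y) := by
      have := Real.log_le_log hApos hmc
      rwa [Real.log_mul (ne_of_gt hC₂) (Real.exp_ne_zero _), Real.log_exp] at this
    have hlog2 : Real.log A ≤ Real.log (2 * B + 2 * W) := Real.log_le_log hApos hA2BW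
    have hlog3 : Real.log (2 * B + 2 * W) ≤
        (2 * B + 2 * W) / (2 * h * (1 - lam)) + (Real.log (2 * h * (1 - lam)) - 1) := by
      have hpos : (0:ℝ) < (2 * B + 2 * W) / (2 * h * (1 - lam)) := by positivity
      have h1 := Real.log_le_sub_one_of_pos hpos
      rw [Real.log_div (ne_of_gt hS) (ne_of_gt hc)] at h1
      linarith
    -- multiplied inequalities (denominators cleared)
    have h4 : lam * (Real.log A - Real.log C₂ - X) ≤ lam * Y := by
      apply mul_le_mul_of_nonneg_left _ hl0.le
      linarith
    have h4h : h * (lam * (Real.log A - Real.log C₂ - X)) ≤ h * (lam * Y) :=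
      mul_le_mul_of_nonneg_left h4 hh.le
    have hstep : Real.log A ≤ (2 * B + 2 * W) / (2 * h * (1 - lam)) +
        (Real.log (2 * h * (1 - lam)) - 1) := le_trans hlog2 hlog3
    have h5h : (h * (1 - lam)) * Real.log A ≤
        B + W + (h * (1 - lam)) * (Real.log (2 * h * (1 - lam)) - 1) := by
      have hm := mul_le_mul_of_nonneg_left hstep
        (by positivity : (0:ℝ) ≤ h * (1 - lam))
      have hid : (h * (1 - lam)) * ((2 * B + 2 * W) / (2 * h * (1 - lam)) +
          (Real.log (2 * h * (1 - lam)) - 1))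
          = B + W + (h * (1 - lam)) * (Real.log (2 * h * (1 - lam)) - 1) := by
        field_simp
      rw [hid] at hm
      exact hm
    have hXl : 0 ≤ h * (1 - lam) * X := by positivity
    have hQ : 0 ≤ B + h * X + h * (lam * Y) - h * Real.log A +
        h * (lam * Real.log C₂) + W +
        h * ((1 - lam) * (Real.log (2 * h * (1 - lam)) - 1)) := by
      nlinarith [h4h, h5h, hXl]
    have hfin : 0 ≤ 1 / (2 * h) * B + 1 / 2 * (X + lam * Y) -
        1 / 2 * Real.log A + K := by
      have heq : 1 / (2 * h) * B + 1 / 2 * (X + lam * Y) -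
          1 / 2 * Real.log A + K
          = (B + h * X + h * (lam * Y) - h * Real.log A +
            h * (lam * Real.log C₂) + W +
            h * ((1 - lam) * (Real.log (2 * h * (1 - lam)) - 1))) / (2 * h) := by
        rw [hKdef]
        field_simp
        ring
      rw [heq]
      exact div_nonneg hQ (by positivity)
    have hKabs : K ≤ |K| := le_abs_self K
    rw [hJ, ge_iff_le]
    linarith [hfin, hKabs]
  · -- degenerate case: A ≤ 0 forces the measure to be zero
    have hintnn : 0 ≤ ∫ p, Real.exp (2 * u p) ∂(footballMeasure α) :=
      integral_nonneg fun p => (Real.exp_pos _).le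
    have hcoef : (0:ℝ) < 1 / (4 * π * α) := by positivity
    have hint0 : ∫ p, Real.exp (2 * u p) ∂(footballMeasure α) = 0 := by
      by_contra hne
      have hpos : 0 < ∫ p, Real.exp (2 * u p) ∂(footballMeasure α) :=
        lt_of_le_of_ne hintnn (Ne.symm hne)
      have : 0 < A := by
        rw [hAdef]
        unfold footballAvg
        exact mul_pos hcoef hpos
      exact absurd this (not_lt.mpr hAle)
    have hae : (fun p => Real.exp (2 * u p)) =ᵐ[footballMeasure α] 0 :=
      (integral_eq_zero_iff_of_nonneg (fun p => (Real.exp_pos _).le) hue).mp hint0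
    have hfalse : ∀ᵐ p ∂(footballMeasure α), False := by
      filter_upwards [hae] with p hp
      exact (Real.exp_pos _).ne' hp
    have hμ0 : footballMeasure α = 0 := by
      have h1 : footballMeasure α {p : ℝ × ℝ | ¬ False} = 0 := ae_iff.mp hfalse
      have h2 : {p : ℝ × ℝ | ¬ False} = Set.univ := by ext p; simp
      rw [h2] at h1
      exact Measure.measure_univ_eq_zero.mp h1
    have hzero : footballJhat α lam h w u = 0 := by
      unfold footballJhat footballAvg
      rw [hμ0]
      simp [integral_zero_measure]
    rw [hzero]
    linarith [abs_nonneg K]
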